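/- arXiv:2101.00484 — 2 statements merged into one kernel-verified Lean document; each statement's English description precedes it below -/
import Mathlib

section
/- Block Toeplitz quasi-score equivalence (two-period case): let Y = (Y₁ᵀ, Y₂ᵀ)ᵀ where Y₁ ∈ ℝ^{n₁} has mean μ₁1 and Y₂ ∈ ℝ^{n₂} has mean μ₂1, with covariance M having blocks M_{jj} = ν_j((1-α₀)I + α₀J_{n_j}) and off-diagonal block M_{12} = √(ν₁ν₂)α₁ 1_{n₁}1_{n₂}ᵀ. Let Ȳ = (Ȳ₁,Ȳ₂)ᵀ with covariance V having V_{jj} = (ν_j/n_j)(1+(n_j-1)α₀) and V_{12} = √(ν₁ν₂)α₁. Then for the 2×p derivative matrix D with rows d_jᵀ = ∂μ_j/∂θᵀ and the expanded derivative E stacking n_j copies of d_jᵀ, one has Eᵀ M⁻¹ (Y − μ) = Dᵀ V⁻¹ (Ȳ − μ̄), whenever M and V are invertible. -/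
/-!
Let `A` be the indicator matrix of the two blocks (so `E = A D`) and `Ā` the block-averaging
matrix (so `Ā (Y - μ) = Ȳ - μ̄`). Every block of `M` has constant column sums, and averaging them
gives exactly the entries of `V`, i.e. `Ā M = V Aᵀ`. With `M` and `V` invertible this turns into
`Aᵀ M⁻¹ = V⁻¹ Ā`, hence `Eᵀ M⁻¹ (Y - μ) = Dᵀ Aᵀ M⁻¹ (Y - μ) = Dᵀ V⁻¹ Ā (Y - μ) = Dᵀ V⁻¹ (Ȳ - μ̄)`.
-/

namespace Matrix

variable {ι ι₁ ι₂ R : Type*}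

theorem mul_inv_eq_inv_mul_of_mul_eq_mul {m n : Type*} [Fintype m] [DecidableEq m] [Fintype n]
    [DecidableEq n] [CommRing R] {M : Matrix m m R} {V : Matrix n n R} {B C : Matrix n m R}
    (hM : IsUnit M.det) (hV : IsUnit V.det) (h : B * M = V * C) : C * M⁻¹ = V⁻¹ * B := by
  rw [← nonsing_inv_mul_cancel_left V (C * M⁻¹) hV, ← Matrix.mul_assoc V, ← h,
    mul_nonsing_inv_cancel_right M B hM]

def compoundSymmetry [Fintype ι] [DecidableEq ι] [Ring R] (ν α : R) : Matrix ι ι R :=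
  ν • ((1 - α) • (1 : Matrix ι ι R) + α • of fun _ _ => 1)

theorem sum_compoundSymmetry_apply [Fintype ι] [DecidableEq ι] [CommRing R] (ν α : R) (j : ι) :
    ∑ i, compoundSymmetry ν α i j = ν * (1 + (Fintype.card ι - 1) * α) := by
  simp only [compoundSymmetry, smul_of, Matrix.smul_apply, add_apply, one_apply, smul_eq_mul,
    mul_ite, mul_one, mul_zero, of_apply, Pi.smul_apply, ← Finset.mul_sum, Finset.sum_add_distrib,
    Finset.sum_ite_eq', Finset.mem_univ, if_true, Finset.sum_const, Finset.card_univ, nsmul_eq_mul]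
  ring

def blockIndicator (ι₁ ι₂ R : Type*) [Zero R] [One R] : Matrix (ι₁ ⊕ ι₂) (Fin 2) R :=
  of (Sum.elim (fun _ => ![1, 0]) (fun _ => ![0, 1]))

theorem blockIndicator_mul [Semiring R] {p : Type*} (D : Matrix (Fin 2) p R) :
    blockIndicator ι₁ ι₂ R * D = of (Sum.elim (fun _ => D 0) (fun _ => D 1)) := by
  ext (i | i) j <;> simp [blockIndicator, mul_apply, Fin.sum_univ_two]

def blockAverage (ι₁ ι₂ R : Type*) [Fintype ι₁] [Fintype ι₂] [DivisionRing R] :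
    Matrix (Fin 2) (ι₁ ⊕ ι₂) R :=
  of ![Sum.elim (fun _ => (Fintype.card ι₁ : R)⁻¹) 0,
    Sum.elim 0 (fun _ => (Fintype.card ι₂ : R)⁻¹)]

variable [Fintype ι₁] [Fintype ι₂] [Field R]

theorem blockAverage_mulVec (Y : ι₁ ⊕ ι₂ → R) :
    blockAverage ι₁ ι₂ R *ᵥ Y =
      ![(∑ k, Y (Sum.inl k)) / Fintype.card ι₁, (∑ k, Y (Sum.inr k)) / Fintype.card ι₂] := by
  ext j; fin_cases j <;> simp [blockAverage, mulVec, dotProduct, Finset.mul_sum, div_eq_inv_mul]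

theorem blockAverage_mulVec_sumElim_const [CharZero R] [Nonempty ι₁] [Nonempty ι₂] (a b : R) :
    blockAverage ι₁ ι₂ R *ᵥ Sum.elim (fun _ => a) (fun _ => b) = ![a, b] := by
  simp [blockAverage_mulVec]

theorem blockAverage_mul_fromBlocks {A : Matrix ι₁ ι₁ R} {B : Matrix ι₁ ι₂ R}
    {C : Matrix ι₂ ι₁ R} {D : Matrix ι₂ ι₂ R} {V : Matrix (Fin 2) (Fin 2) R}
    (hA : ∀ j, (∑ i, A i j) / Fintype.card ι₁ = V 0 0)
    (hB : ∀ j, (∑ i, B i j) / Fintype.card ι₁ = V 0 1)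
    (hC : ∀ j, (∑ i, C i j) / Fintype.card ι₂ = V 1 0)
    (hD : ∀ j, (∑ i, D i j) / Fintype.card ι₂ = V 1 1) :
    blockAverage ι₁ ι₂ R * fromBlocks A B C D = V * (blockIndicator ι₁ ι₂ R)ᵀ := by
  ext i (j | j) <;> fin_cases i <;>
    simp [blockAverage, blockIndicator, mul_apply, Fin.sum_univ_two, inv_mul_eq_div,
      ← Finset.sum_div, hA, hB, hC, hD]

end Matrix

open Matrix

theorem quasi_score_equivalence_two_periods_general
    (n₁ n₂ p : ℕ) (hn₁ : 0 < n₁) (hn₂ : 0 < n₂)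
    (ν₁ ν₂ α₀ α₁ μ₁ μ₂ : ℝ)
    (D : Matrix (Fin 2) (Fin p) ℝ) (Y : Fin n₁ ⊕ Fin n₂ → ℝ)
    (M : Matrix (Fin n₁ ⊕ Fin n₂) (Fin n₁ ⊕ Fin n₂) ℝ)
    (hM : M = Matrix.fromBlocks
      (ν₁ • ((1 - α₀) • (1 : Matrix (Fin n₁) (Fin n₁) ℝ) +
        α₀ • (Matrix.of fun _ _ => (1 : ℝ))))
      ((Real.sqrt (ν₁ * ν₂) * α₁) • (Matrix.of fun _ _ => (1 : ℝ)))
      ((Real.sqrt (ν₁ * ν₂) * α₁) • (Matrix.of fun _ _ => (1 : ℝ)))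
      (ν₂ • ((1 - α₀) • (1 : Matrix (Fin n₂) (Fin n₂) ℝ) +
        α₀ • (Matrix.of fun _ _ => (1 : ℝ)))))
    (V : Matrix (Fin 2) (Fin 2) ℝ)
    (hV : V = !![ν₁ / n₁ * (1 + ((n₁ : ℝ) - 1) * α₀), Real.sqrt (ν₁ * ν₂) * α₁;
                 Real.sqrt (ν₁ * ν₂) * α₁, ν₂ / n₂ * (1 + ((n₂ : ℝ) - 1) * α₀)])
    (hMunit : IsUnit M.det) (hVunit : IsUnit V.det)
    (E : Matrix (Fin n₁ ⊕ Fin n₂) (Fin p) ℝ)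
    (hE : E = Matrix.of (Sum.elim (fun _ => D 0) (fun _ => D 1)))
    (μvec : Fin n₁ ⊕ Fin n₂ → ℝ)
    (hμvec : μvec = Sum.elim (fun _ => μ₁) (fun _ => μ₂))
    (Ybar : Fin 2 → ℝ)
    (hYbar : Ybar = ![(∑ k, Y (Sum.inl k)) / n₁, (∑ k, Y (Sum.inr k)) / n₂]) :
    Eᵀ *ᵥ (M⁻¹ *ᵥ (Y - μvec)) = Dᵀ *ᵥ (V⁻¹ *ᵥ (Ybar - ![μ₁, μ₂])) := by
  have : NeZero n₁ := ⟨hn₁.ne'⟩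
  have : NeZero n₂ := ⟨hn₂.ne'⟩
  have hAvg :
      blockAverage (Fin n₁) (Fin n₂) ℝ * M = V * (blockIndicator (Fin n₁) (Fin n₂) ℝ)ᵀ := by
    rw [← compoundSymmetry, ← compoundSymmetry] at hM
    subst hM hV
    apply blockAverage_mul_fromBlocks <;> intro j <;>
      simp only [sum_compoundSymmetry_apply, Matrix.smul_apply, of_apply, smul_eq_mul, mul_one,
        Finset.sum_const, Finset.card_univ, Fintype.card_fin, nsmul_eq_mul, cons_val',
        cons_val_zero, cons_val_one, cons_val_fin_one] <;>
      field_simp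
  calc Eᵀ *ᵥ (M⁻¹ *ᵥ (Y - μvec))
      = Dᵀ *ᵥ (((blockIndicator (Fin n₁) (Fin n₂) ℝ)ᵀ * M⁻¹) *ᵥ (Y - μvec)) := by
        rw [hE, ← blockIndicator_mul, transpose_mul, mulVec_mulVec, mulVec_mulVec, Matrix.mul_assoc]
    _ = Dᵀ *ᵥ (V⁻¹ *ᵥ (blockAverage (Fin n₁) (Fin n₂) ℝ *ᵥ (Y - μvec))) := by
        rw [mul_inv_eq_inv_mul_of_mul_eq_mul hMunit hVunit hAvg]
        simp only [← mulVec_mulVec]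
    _ = Dᵀ *ᵥ (V⁻¹ *ᵥ (Ybar - ![μ₁, μ₂])) := by
        rw [mulVec_sub, hμvec, blockAverage_mulVec_sumElim_const, blockAverage_mulVec, hYbar]
        simp only [Fintype.card_fin]

/-- block Toeplitz quasi-score equivalence (two-period case):
`Eᵀ M⁻¹ (Y − μ) = Dᵀ V⁻¹ (Ȳ − μ̄)` whenever `M` and `V` are invertible. -/
theorem quasi_score_equivalence_two_periods
    (n₁ n₂ p : ℕ) (hn₁ : 0 < n₁) (hn₂ : 0 < n₂)
    (ν₁ ν₂ α₀ α₁ μ₁ μ₂ : ℝ) (hν₁ : 0 < ν₁) (hν₂ : 0 < ν₂)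
    (h0 : 0 ≤ α₀) (h1 : α₀ < 1)
    (D : Matrix (Fin 2) (Fin p) ℝ) (Y : Fin n₁ ⊕ Fin n₂ → ℝ)
    (M : Matrix (Fin n₁ ⊕ Fin n₂) (Fin n₁ ⊕ Fin n₂) ℝ)
    (hM : M = Matrix.fromBlocks
      (ν₁ • ((1 - α₀) • (1 : Matrix (Fin n₁) (Fin n₁) ℝ) +
        α₀ • (Matrix.of fun _ _ => (1 : ℝ))))
      ((Real.sqrt (ν₁ * ν₂) * α₁) • (Matrix.of fun _ _ => (1 : ℝ)))
      ((Real.sqrt (ν₁ * ν₂) * α₁) • (Matrix.of fun _ _ => (1 : ℝ)))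
      (ν₂ • ((1 - α₀) • (1 : Matrix (Fin n₂) (Fin n₂) ℝ) +
        α₀ • (Matrix.of fun _ _ => (1 : ℝ)))))
    (V : Matrix (Fin 2) (Fin 2) ℝ)
    (hV : V = !![ν₁ / n₁ * (1 + ((n₁ : ℝ) - 1) * α₀), Real.sqrt (ν₁ * ν₂) * α₁;
                 Real.sqrt (ν₁ * ν₂) * α₁, ν₂ / n₂ * (1 + ((n₂ : ℝ) - 1) * α₀)])
    (hMunit : IsUnit M.det) (hVunit : IsUnit V.det)
    (E : Matrix (Fin n₁ ⊕ Fin n₂) (Fin p) ℝ)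
    (hE : E = Matrix.of (Sum.elim (fun _ => D 0) (fun _ => D 1)))
    (μvec : Fin n₁ ⊕ Fin n₂ → ℝ)
    (hμvec : μvec = Sum.elim (fun _ => μ₁) (fun _ => μ₂))
    (Ybar : Fin 2 → ℝ)
    (hYbar : Ybar = ![(∑ k, Y (Sum.inl k)) / n₁, (∑ k, Y (Sum.inr k)) / n₂]) :
    Eᵀ *ᵥ (M⁻¹ *ᵥ (Y - μvec)) = Dᵀ *ᵥ (V⁻¹ *ᵥ (Ybar - ![μ₁, μ₂])) :=
  quasi_score_equivalence_two_periods_general n₁ n₂ p hn₁ hn₂ ν₁ ν₂ α₀ α₁ μ₁ μ₂ D Y M hM V hV hMunit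
    hVunit E hE μvec hμvec Ybar hYbar
end

section
/- Information equivalence (two-period case): under the setting of the previous statement, Eᵀ M⁻¹ E = Dᵀ V⁻¹ D. -/
/-!
Let `P` be the `0/1` matrix recording the period of each individual, so that `E = P D` and
`PᵀP = diag(n₁, n₂)`. Every block of `M` has constant row sums, so the column space of `P` is
`M`-invariant; the row sums are exactly the entries of `V diag(n₁, n₂)`, i.e. `M P = P V (PᵀP)`.
Hence `M⁻¹ P = P (PᵀP)⁻¹ V⁻¹`, and `Eᵀ M⁻¹ E = Dᵀ (PᵀP) (PᵀP)⁻¹ V⁻¹ D = Dᵀ V⁻¹ D`.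
-/

open Matrix

section Transfer

variable {R : Type*} [CommRing R] {m k p : Type*} [Fintype m] [DecidableEq m] [Fintype k]
  [DecidableEq k]

theorem Matrix.inv_mul_eq_mul_inv_of_mul_eq_mul {M : Matrix m m R} {P : Matrix m k R}
    {W : Matrix k k R} (hMP : M * P = P * W) (hM : IsUnit M.det) (hW : IsUnit W.det) :
    M⁻¹ * P = P * W⁻¹ :=
  calc M⁻¹ * P = M⁻¹ * (P * W) * W⁻¹ := by
        rw [Matrix.mul_assoc, Matrix.mul_assoc, mul_nonsing_inv W hW, Matrix.mul_one]
    _ = P * W⁻¹ := by rw [← hMP, ← Matrix.mul_assoc, nonsing_inv_mul M hM, Matrix.one_mul]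

theorem Matrix.transpose_mul_inv_mul_eq_of_mul_eq_mul_gram {M : Matrix m m R} {P : Matrix m k R}
    {V : Matrix k k R} (hMP : M * P = P * (V * (Pᵀ * P))) (hM : IsUnit M.det)
    (hV : IsUnit V.det) (hG : IsUnit (Pᵀ * P).det) (D : Matrix k p R) :
    (P * D)ᵀ * M⁻¹ * (P * D) = Dᵀ * V⁻¹ * D := by
  have hMinvP : M⁻¹ * P = P * ((Pᵀ * P)⁻¹ * V⁻¹) := by
    rw [inv_mul_eq_mul_inv_of_mul_eq_mul hMP hM (by rw [det_mul]; exact hV.mul hG), mul_inv_rev]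
  calc (P * D)ᵀ * M⁻¹ * (P * D) = Dᵀ * ((Pᵀ * P) * (Pᵀ * P)⁻¹) * V⁻¹ * D := by
        rw [transpose_mul, Matrix.mul_assoc, ← Matrix.mul_assoc M⁻¹, hMinvP]
        simp only [Matrix.mul_assoc]
    _ = Dᵀ * V⁻¹ * D := by rw [mul_nonsing_inv _ hG, Matrix.mul_one]

end Transfer

section Exchangeable

variable {R : Type*} [CommRing R] {ι κ k : Type*} [Fintype κ]

theorem Matrix.of_one_mul_replicateRow (v : k → R) :
    (of fun _ _ => (1 : R) : Matrix ι κ R) * replicateRow κ v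
      = (Fintype.card κ : R) • replicateRow ι v := by
  ext i j
  simp [mul_apply]

theorem Matrix.exchangeable_mul_replicateRow [Fintype ι] [DecidableEq ι] (ν α : R) (v : k → R) :
    (ν • ((1 - α) • (1 : Matrix ι ι R) + α • of fun _ _ => (1 : R))) * replicateRow ι v
      = (ν * (1 + ((Fintype.card ι : R) - 1) * α)) • replicateRow ι v := by
  simp only [Matrix.smul_mul, Matrix.add_mul, Matrix.one_mul, of_one_mul_replicateRow]
  module

end Exchangeable

section PeriodIndicator

variable (R : Type*) [CommRing R] (ι₁ ι₂ : Type*)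

def periodIndicator : Matrix (ι₁ ⊕ ι₂) (Fin 2) R :=
  fromRows (replicateRow ι₁ (Pi.single 0 1)) (replicateRow ι₂ (Pi.single 1 1))

theorem periodIndicator_mul {p : Type*} (D : Matrix (Fin 2) p R) :
    periodIndicator R ι₁ ι₂ * D = of (Sum.elim (fun _ => D 0) (fun _ => D 1)) := by
  rw [periodIndicator, fromRows_mul, ← replicateRow_vecMul, ← replicateRow_vecMul,
    single_one_vecMul, single_one_vecMul]
  rfl

theorem transpose_periodIndicator_mul_self [Fintype ι₁] [Fintype ι₂] :
    (periodIndicator R ι₁ ι₂)ᵀ * periodIndicator R ι₁ ι₂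
      = diagonal ![(Fintype.card ι₁ : R), Fintype.card ι₂] := by
  ext i j
  fin_cases i <;> fin_cases j <;> simp [periodIndicator, mul_apply, Fintype.sum_sum_type]

theorem fromBlocks_exchangeable_mul_periodIndicator [Fintype ι₁] [DecidableEq ι₁] [Fintype ι₂]
    [DecidableEq ι₂] (ν₁ ν₂ α c : R) :
    fromBlocks (ν₁ • ((1 - α) • (1 : Matrix ι₁ ι₁ R) + α • of fun _ _ => (1 : R)))
        (c • of fun _ _ => (1 : R)) (c • of fun _ _ => (1 : R))
        (ν₂ • ((1 - α) • (1 : Matrix ι₂ ι₂ R) + α • of fun _ _ => (1 : R)))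
        * periodIndicator R ι₁ ι₂
      = periodIndicator R ι₁ ι₂ *
          !![ν₁ * (1 + ((Fintype.card ι₁ : R) - 1) * α), c * Fintype.card ι₂;
             c * Fintype.card ι₁, ν₂ * (1 + ((Fintype.card ι₂ : R) - 1) * α)] := by
  rw [periodIndicator, fromBlocks_mul_fromRows, fromRows_mul]
  rw [exchangeable_mul_replicateRow, exchangeable_mul_replicateRow, Matrix.smul_mul,
    Matrix.smul_mul, of_one_mul_replicateRow, of_one_mul_replicateRow, smul_smul, smul_smul,
    ← replicateRow_vecMul, ← replicateRow_vecMul, single_one_vecMul, single_one_vecMul,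
    ← replicateRow_smul, ← replicateRow_smul, ← replicateRow_smul, ← replicateRow_smul,
    ← replicateRow_add, ← replicateRow_add]
  congr 2 <;> ext j <;> fin_cases j <;> simp

end PeriodIndicator

theorem information_equivalence_two_periods_general
    (n₁ n₂ p : ℕ) (hn₁ : 0 < n₁) (hn₂ : 0 < n₂)
    (ν₁ ν₂ α₀ α₁ : ℝ)
    (D : Matrix (Fin 2) (Fin p) ℝ)
    (M : Matrix (Fin n₁ ⊕ Fin n₂) (Fin n₁ ⊕ Fin n₂) ℝ)
    (hM : M = Matrix.fromBlocks
      (ν₁ • ((1 - α₀) • (1 : Matrix (Fin n₁) (Fin n₁) ℝ) +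
        α₀ • (Matrix.of fun _ _ => (1 : ℝ))))
      ((Real.sqrt (ν₁ * ν₂) * α₁) • (Matrix.of fun _ _ => (1 : ℝ)))
      ((Real.sqrt (ν₁ * ν₂) * α₁) • (Matrix.of fun _ _ => (1 : ℝ)))
      (ν₂ • ((1 - α₀) • (1 : Matrix (Fin n₂) (Fin n₂) ℝ) +
        α₀ • (Matrix.of fun _ _ => (1 : ℝ)))))
    (V : Matrix (Fin 2) (Fin 2) ℝ)
    (hV : V = !![ν₁ / n₁ * (1 + ((n₁ : ℝ) - 1) * α₀), Real.sqrt (ν₁ * ν₂) * α₁;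
                 Real.sqrt (ν₁ * ν₂) * α₁, ν₂ / n₂ * (1 + ((n₂ : ℝ) - 1) * α₀)])
    (hMunit : IsUnit M.det) (hVunit : IsUnit V.det)
    (E : Matrix (Fin n₁ ⊕ Fin n₂) (Fin p) ℝ)
    (hE : E = Matrix.of (Sum.elim (fun _ => D 0) (fun _ => D 1))) :
    Eᵀ * M⁻¹ * E = Dᵀ * V⁻¹ * D := by
  have hn₁' : (n₁ : ℝ) ≠ 0 := by positivity
  have hn₂' : (n₂ : ℝ) ≠ 0 := by positivity
  set P := periodIndicator ℝ (Fin n₁) (Fin n₂)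
  have hG : Pᵀ * P = diagonal ![(n₁ : ℝ), n₂] := by
    simpa using transpose_periodIndicator_mul_self ℝ (Fin n₁) (Fin n₂)
  have hMP : M * P = P * (V * (Pᵀ * P)) := by
    rw [hM, fromBlocks_exchangeable_mul_periodIndicator, hG, hV]
    simp only [Fintype.card_fin]
    congr 1
    ext i j
    fin_cases i <;> fin_cases j <;> simp <;> field_simp
  rw [hE, ← periodIndicator_mul]
  refine transpose_mul_inv_mul_eq_of_mul_eq_mul_gram hMP hMunit hVunit ?_ D
  rw [hG, det_diagonal, Fin.prod_univ_two]
  exact (isUnit_iff_ne_zero.mpr hn₁').mul (isUnit_iff_ne_zero.mpr hn₂')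

/-- information equivalence (two-period case): `Eᵀ M⁻¹ E = Dᵀ V⁻¹ D`. -/
theorem information_equivalence_two_periods
    (n₁ n₂ p : ℕ) (hn₁ : 0 < n₁) (hn₂ : 0 < n₂)
    (ν₁ ν₂ α₀ α₁ : ℝ) (hν₁ : 0 < ν₁) (hν₂ : 0 < ν₂)
    (h0 : 0 ≤ α₀) (h1 : α₀ < 1)
    (D : Matrix (Fin 2) (Fin p) ℝ)
    (M : Matrix (Fin n₁ ⊕ Fin n₂) (Fin n₁ ⊕ Fin n₂) ℝ)
    (hM : M = Matrix.fromBlocks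
      (ν₁ • ((1 - α₀) • (1 : Matrix (Fin n₁) (Fin n₁) ℝ) +
        α₀ • (Matrix.of fun _ _ => (1 : ℝ))))
      ((Real.sqrt (ν₁ * ν₂) * α₁) • (Matrix.of fun _ _ => (1 : ℝ)))
      ((Real.sqrt (ν₁ * ν₂) * α₁) • (Matrix.of fun _ _ => (1 : ℝ)))
      (ν₂ • ((1 - α₀) • (1 : Matrix (Fin n₂) (Fin n₂) ℝ) +
        α₀ • (Matrix.of fun _ _ => (1 : ℝ)))))
    (V : Matrix (Fin 2) (Fin 2) ℝ)
    (hV : V = !![ν₁ / n₁ * (1 + ((n₁ : ℝ) - 1) * α₀), Real.sqrt (ν₁ * ν₂) * α₁;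
                 Real.sqrt (ν₁ * ν₂) * α₁, ν₂ / n₂ * (1 + ((n₂ : ℝ) - 1) * α₀)])
    (hMunit : IsUnit M.det) (hVunit : IsUnit V.det)
    (E : Matrix (Fin n₁ ⊕ Fin n₂) (Fin p) ℝ)
    (hE : E = Matrix.of (Sum.elim (fun _ => D 0) (fun _ => D 1))) :
    Eᵀ * M⁻¹ * E = Dᵀ * V⁻¹ * D :=
  information_equivalence_two_periods_general n₁ n₂ p hn₁ hn₂ ν₁ ν₂ α₀ α₁ D M hM V hV hMunit hVunit
    E hE
end
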